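/- In any algebra (S,*,') satisfying the three axioms, the identity x'' = x'' * (x' * x) holds for all x in S. -/

import Mathlib

/-!
Put `a = x′′`. By (E1) the element `a ⋆ a′` is a left unit for `a`, and (E3) read backwards
absorbs a trailing `⋆ a` into `⋆ x`, because `a` is the double prime of `x`. Inserting that left
unit and re-associating gives `a = a ⋆ (x′ ⋆ a)`, and the same manoeuvre inside `x′ ⋆ a`
gives `x′ ⋆ a = x′ ⋆ x`.
-/

section

variable {S : Type*} {m : S → S → S} {i : S → S}

local infixl:70 " ⋆ " => m
local postfix:max "′" => i

theorem mul_inv_mul_mul_inv_inv (E1 : ∀ x, (x ⋆ x′) ⋆ x = x)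
    (E3 : ∀ x y z, (x ⋆ y) ⋆ z = x ⋆ (y ⋆ z′′)) (a y : S) :
    (a ⋆ a′) ⋆ (a ⋆ y′′) = a ⋆ y := by
  rw [← E3, E1]

theorem inv_inv_eq_inv_inv_mul_inv_mul_inv_inv (E1 : ∀ x, (x ⋆ x′) ⋆ x = x)
    (E3 : ∀ x y z, (x ⋆ y) ⋆ z = x ⋆ (y ⋆ z′′)) (x : S) :
    x′′ = x′′ ⋆ (x′ ⋆ x′′) :=
  calc x′′ = (x′′ ⋆ x′′′) ⋆ x′′ := (E1 _).symm
    _ = (x′′ ⋆ x′′′) ⋆ ((x′′ ⋆ x′′′) ⋆ x′′) := by rw [E1, E1]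
    _ = ((x′′ ⋆ x′′′) ⋆ (x′′ ⋆ x′′′)) ⋆ x := (E3 _ _ _).symm
    _ = (x′′ ⋆ x′) ⋆ x := by rw [mul_inv_mul_mul_inv_inv E1 E3]
    _ = x′′ ⋆ (x′ ⋆ x′′) := E3 _ _ _

theorem inv_mul_inv_inv (E1 : ∀ x, (x ⋆ x′) ⋆ x = x)
    (E3 : ∀ x y z, (x ⋆ y) ⋆ z = x ⋆ (y ⋆ z′′)) (x : S) :
    x′ ⋆ x′′ = x′ ⋆ x :=
  calc x′ ⋆ x′′ = x′ ⋆ ((x′′ ⋆ x′′′) ⋆ x′′) := by rw [E1]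
    _ = (x′ ⋆ (x′′ ⋆ x′′′)) ⋆ x := (E3 _ _ _).symm
    _ = ((x′ ⋆ x′′) ⋆ x′) ⋆ x := by rw [E3 x′ x′′ x′]
    _ = x′ ⋆ x := by rw [E1]

end

theorem stmt_general (S : Type*) (m : S → S → S) (i : S → S)
    (E1 : ∀ x, m (m x (i x)) x = x)
    (E3 : ∀ x y z, m (m x y) z = m x (m y (i (i z)))) :
    ∀ x, i (i x) = m (i (i x)) (m (i x) x) := by
  intro x
  rw [← inv_mul_inv_inv E1 E3]
  exact inv_inv_eq_inv_inv_mul_inv_mul_inv_inv E1 E3 x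

theorem stmt (S : Type*) (m : S → S → S) (i : S → S)
    (E1 : ∀ x, m (m x (i x)) x = x)
    (E2 : ∀ x y, m (m x (i x)) (m (i y) y) = m (m (i y) y) (m x (i x)))
    (E3 : ∀ x y z, m (m x y) z = m x (m y (i (i z)))) :
    ∀ x, i (i x) = m (i (i x)) (m (i x) x) :=
  stmt_general S m i E1 E3
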